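/- Let k ≥ 2 and let x = x_1…x_k and y = y_1…y_k be vertices of the hierarchical graph H_{n_1,…,n_k} with x_k ≠ y_k (no common suffix). If x_k = 0 or y_k = 0, then the graph distance satisfies dist(x,y) = alt(x) + alt(y). -/

import Mathlib

/-- The value of the `j`-th coordinate (0-indexed) of the string `x`,
extended by `0` for positions `≥ k`. -/
def extVal (n : ℕ → ℕ) (k : ℕ) (x : ∀ i : Fin k, Fin (n i)) (j : ℕ) : ℕ :=
  if h : j < k then (x ⟨j, h⟩).val else 0

/-- The alternating number of the string `x`: the number of (0-indexed) positions
`j ∈ {0,…,k-1}` such that exactly one of `x_j`, `x_{j+1}` is zero (with `x_k := 0`). -/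
def altNum (n : ℕ → ℕ) (k : ℕ) (x : ∀ i : Fin k, Fin (n i)) : ℕ :=
  ((Finset.range k).filter (fun j =>
    (extVal n k x j = 0 ∧ extVal n k x (j + 1) ≠ 0) ∨
    (extVal n k x j ≠ 0 ∧ extVal n k x (j + 1) = 0))).card

/-- Adjacency in the hierarchical graph `H_{n_1,…,n_k}` (coordinates 0-indexed):
rule (A1): the two strings differ exactly in the first coordinate;
rule (A2): for some `j`, one string has its first `j+1` coordinates all zero, the other
has its first `j+1` coordinates all nonzero, and they agree on the remaining coordinates;
rule (A3): for some `m ≥ 1`, both strings have their first `m` coordinates zero, their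
`m`-th coordinates are distinct and nonzero, and they agree beyond position `m`. -/
def HierAdj (n : ℕ → ℕ) (k : ℕ) (x y : ∀ i : Fin k, Fin (n i)) : Prop :=
  x ≠ y ∧
    ((∀ i : Fin k, 0 < i.val → x i = y i) ∨
     (∃ j : Fin k,
       (((∀ i : Fin k, i.val ≤ j.val → (x i).val = 0) ∧
         (∀ i : Fin k, i.val ≤ j.val → (y i).val ≠ 0)) ∨
        ((∀ i : Fin k, i.val ≤ j.val → (y i).val = 0) ∧
         (∀ i : Fin k, i.val ≤ j.val → (x i).val ≠ 0))) ∧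
       (∀ i : Fin k, j.val < i.val → x i = y i)) ∨
     (∃ m : Fin k, 0 < m.val ∧
       (∀ i : Fin k, i.val < m.val → (x i).val = 0 ∧ (y i).val = 0) ∧
       (x m).val ≠ 0 ∧ (y m).val ≠ 0 ∧ x m ≠ y m ∧
       (∀ i : Fin k, m.val < i.val → x i = y i)))

/-- The hierarchical graph `H_{n_1,…,n_k}` as a simple graph on the strings
`x = x_1…x_k` with `x_i ∈ Z_{n_i}`. -/
def hierGraph (n : ℕ → ℕ) (k : ℕ) : SimpleGraph (∀ i : Fin k, Fin (n i)) where
  Adj := HierAdj n k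
  symm := by
    constructor
    rintro x y ⟨hne, h⟩
    refine ⟨hne.symm, ?_⟩
    rcases h with h | ⟨j, hj, hag⟩ | ⟨m, hm, hpre, hx, hy, hxy, hs⟩
    · exact Or.inl fun i hi => (h i hi).symm
    · exact Or.inr (Or.inl ⟨j, hj.symm, fun i hi => (hag i hi).symm⟩)
    · exact Or.inr (Or.inr ⟨m, hm, fun i hi => ⟨(hpre i hi).2, (hpre i hi).1⟩,
        hy, hx, hxy.symm, fun i hi => (hs i hi).symm⟩)
  loopless := ⟨fun x h => h.1 rfl⟩

/-!
Record the zero pattern of a vertex `x`, i.e. which of `x_1, …, x_k, x_{k+1} = 0` vanish; then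
`alt(x)` is the number of switches in it. Along every edge the zero patterns of both endpoints
are constant on a common initial segment and agree beyond it, so `alt` changes by at most one;
if that segment reaches the last coordinate, both endpoints have `alt ≤ 1`, and `alt = 0` when
the last coordinate vanishes. Hence `±alt(x)`, negative iff `x_k = 0`, is 1-Lipschitz, and when
exactly one of `x_k`, `y_k` vanishes its values at `x` and `y` differ by `alt(x) + alt(y)`.
Conversely, rule (A2) flips the leading constant block of the zero pattern, lowering `alt` by
one, so every vertex reaches `0…0` in at most `alt(x)` steps.
-/

open Finset

section Switches

variable {p q : ℕ → Prop} {k i j : ℕ}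

lemma iff_of_forall_lt_iff_succ (h : ∀ i < j, p i ↔ p (i + 1)) (hi : i ≤ j) :
    p i ↔ p j := by
  induction j with
  | zero => rw [Nat.le_zero.mp hi]
  | succ j ih =>
    rcases hi.lt_or_eq with hi | rfl
    · exact (ih (fun i hij => h i (by omega)) (by omega)).trans (h j (by omega))
    · rfl

variable [DecidablePred p] [DecidablePred q]

variable (p) in
def switches (k : ℕ) : Finset ℕ := {j ∈ range k | ¬(p j ↔ p (j + 1))}

lemma mem_switches : j ∈ switches p k ↔ j < k ∧ ¬(p j ↔ p (j + 1)) := by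
  simp [switches]

lemma iff_of_switches_eq_empty (h : switches p k = ∅) (hi : i ≤ k) : p i ↔ p k :=
  iff_of_forall_lt_iff_succ (fun i hik => by
    by_contra hc
    simpa [h] using (mem_switches (p := p)).mpr ⟨hik, hc⟩) hi

lemma exists_mem_switches_forall_lt (h : (switches p k).Nonempty) :
    ∃ t ∈ switches p k, ∀ i < t, p i ↔ p (i + 1) := by
  refine ⟨_, min'_mem _ h, fun i hi => ?_⟩
  by_contra hc
  have htk := (mem_switches.mp (min'_mem _ h)).1
  have := min'_le (switches p k) i (mem_switches.mpr ⟨by omega, hc⟩)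
  omega

lemma switches_subset_singleton (h : ∀ i < k - 1, p i ↔ p (i + 1)) :
    switches p k ⊆ {k - 1} := by
  intro i hi
  rw [mem_switches] at hi
  rw [mem_singleton]
  by_contra hne
  exact hi.2 (h i (by omega))

lemma erase_switches_eq (hp : ∀ i < j, p i ↔ p (i + 1)) (hq : ∀ i < j, q i ↔ q (i + 1))
    (hpq : ∀ i, j < i → (p i ↔ q i)) : (switches p k).erase j = (switches q k).erase j := by
  ext i
  simp only [mem_erase, mem_switches]
  rcases lt_trichotomy i j with h | rfl | h
  · simp [hp i h, hq i h]
  · simp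
  · rw [hpq i h, hpq (i + 1) (by omega)]

lemma card_switches_le (hp : ∀ i < j, p i ↔ p (i + 1)) (hq : ∀ i < j, q i ↔ q (i + 1))
    (hpq : ∀ i, j < i → (p i ↔ q i)) : #(switches p k) ≤ #(switches q k) + 1 :=
  calc #(switches p k)
    _ ≤ #((switches p k).erase j) + 1 := by
      have := pred_card_le_card_erase (s := switches p k) (a := j)
      omega
    _ = #((switches q k).erase j) + 1 := by rw [erase_switches_eq hp hq hpq]
    _ ≤ #(switches q k) + 1 := by grw [card_erase_le]

lemma card_switches_eq_succ (hp : ∀ i < j, p i ↔ p (i + 1)) (hq : ∀ i < j, q i ↔ q (i + 1))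
    (hpq : ∀ i, j < i → (p i ↔ q i)) (hjp : j ∈ switches p k) (hjq : j ∉ switches q k) :
    #(switches p k) = #(switches q k) + 1 := by
  rw [← card_erase_add_one hjp, erase_switches_eq hp hq hpq, erase_eq_of_notMem hjq]

end Switches

section HierGraph

variable {n : ℕ → ℕ} {k : ℕ} {x y : ∀ i : Fin k, Fin (n i)}

lemma extVal_of_lt (x : ∀ i : Fin k, Fin (n i)) {j : ℕ} (h : j < k) :
    extVal n k x j = (x ⟨j, h⟩).val := dif_pos h

lemma extVal_of_le (x : ∀ i : Fin k, Fin (n i)) {j : ℕ} (h : k ≤ j) :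
    extVal n k x j = 0 := dif_neg (by omega)

@[simp]
lemma extVal_fin (x : ∀ i : Fin k, Fin (n i)) (i : Fin k) : extVal n k x i = (x i).val :=
  extVal_of_lt x i.isLt

abbrev zeroPattern (x : ∀ i : Fin k, Fin (n i)) (j : ℕ) : Prop := extVal n k x j = 0

lemma zeroPattern_iff_of_forall_lt {j : ℕ} (h : ∀ i : Fin k, j < i.val → x i = y i) {i : ℕ}
    (hi : j < i) : zeroPattern x i ↔ zeroPattern y i := by
  by_cases hik : i < k
  · rw [zeroPattern, zeroPattern, extVal_of_lt x hik, extVal_of_lt y hik, h ⟨i, hik⟩ hi]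
  · rw [zeroPattern, zeroPattern, extVal_of_le x (by omega), extVal_of_le y (by omega)]

lemma zeroPattern_of_le (x : ∀ i : Fin k, Fin (n i)) {j : ℕ} (h : k ≤ j) : zeroPattern x j :=
  extVal_of_le x h

lemma altNum_eq_card_switches (x : ∀ i : Fin k, Fin (n i)) :
    altNum n k x = #(switches (zeroPattern x) k) := by
  unfold altNum switches
  congr 1
  refine filter_congr fun j _ => ?_
  tauto

lemma eq_of_switches_eq_empty {z : ∀ i : Fin k, Fin (n i)} (hz : ∀ j, zeroPattern z j)
    (hx : switches (zeroPattern x) k = ∅) : x = z := by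
  funext i
  have hxi := (iff_of_switches_eq_empty hx i.isLt.le).mpr (zeroPattern_of_le x le_rfl)
  have hzi := hz i
  simp only [zeroPattern, extVal_fin] at hxi hzi
  exact Fin.ext (hxi.trans hzi.symm)

lemma zeroPattern_iff_succ_of_forall_le {j : Fin k} {b : Prop}
    (h : ∀ i : Fin k, i.val ≤ j.val → ((x i).val = 0 ↔ b)) :
    ∀ i < j.val, zeroPattern x i ↔ zeroPattern x (i + 1) := fun i hi => by
  rw [zeroPattern, zeroPattern, extVal_of_lt x (by omega), extVal_of_lt x (by omega),
    h ⟨i, _⟩ hi.le, h ⟨i + 1, _⟩ hi]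

lemma exists_prefix_of_adj (h : (hierGraph n k).Adj x y) :
    ∃ j, (∀ i < j, zeroPattern x i ↔ zeroPattern x (i + 1)) ∧
      (∀ i < j, zeroPattern y i ↔ zeroPattern y (i + 1)) ∧
      ∀ i, j < i → (zeroPattern x i ↔ zeroPattern y i) := by
  obtain ⟨-, hA1 | ⟨j, hxy | hyx, hagree⟩ | ⟨m, hm, hpre, hxm, hym, -, hagree⟩⟩ := h
  · exact ⟨0, by simp, by simp, fun i hi => zeroPattern_iff_of_forall_lt hA1 hi⟩
  · exact ⟨j, zeroPattern_iff_succ_of_forall_le fun i hi => iff_true_intro (hxy.1 i hi),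
      zeroPattern_iff_succ_of_forall_le fun i hi => iff_false_intro (hxy.2 i hi),
      fun i hi => zeroPattern_iff_of_forall_lt hagree hi⟩
  · exact ⟨j, zeroPattern_iff_succ_of_forall_le fun i hi => iff_false_intro (hyx.2 i hi),
      zeroPattern_iff_succ_of_forall_le fun i hi => iff_true_intro (hyx.1 i hi),
      fun i hi => zeroPattern_iff_of_forall_lt hagree hi⟩
  · refine ⟨0, by simp, by simp, fun i hi => ?_⟩
    rcases lt_trichotomy i m with him | rfl | him
    · have := hpre ⟨i, by omega⟩ him
      simp [zeroPattern, extVal_of_lt x (by omega : i < k), extVal_of_lt y (by omega : i < k),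
        this]
    · simp [zeroPattern, hxm, hym]
    · exact zeroPattern_iff_of_forall_lt hagree him

def signedAltNum (x : ∀ i : Fin k, Fin (n i)) : ℤ :=
  if zeroPattern x (k - 1) then -(altNum n k x : ℤ) else altNum n k x

lemma signedAltNum_mem_Icc_of_const
    (hx : ∀ i < k - 1, zeroPattern x i ↔ zeroPattern x (i + 1)) :
    signedAltNum x ∈ Set.Icc (0 : ℤ) 1 := by
  have hsub := switches_subset_singleton hx
  have hle : altNum n k x ≤ 1 := by
    rw [altNum_eq_card_switches]
    exact (card_le_card hsub).trans (card_singleton _).le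
  unfold signedAltNum
  split_ifs with hlast
  · have hnot : k - 1 ∉ switches (zeroPattern x) k := fun hmem =>
      (mem_switches.mp hmem).2 (iff_of_true hlast (zeroPattern_of_le x (by omega)))
    have hempty : switches (zeroPattern x) k = ∅ := by
      rcases subset_singleton_iff.mp hsub with h | h
      · exact h
      · exact absurd (h ▸ mem_singleton_self _) hnot
    simp [altNum_eq_card_switches, hempty]
  · constructor <;> omega

lemma abs_signedAltNum_sub_le_one (h : (hierGraph n k).Adj x y) :
    |signedAltNum x - signedAltNum y| ≤ 1 := by
  obtain ⟨j, hx, hy, hxy⟩ := exists_prefix_of_adj h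
  by_cases hj : j < k - 1
  · have hxy' := card_switches_le (k := k) hx hy hxy
    have hyx' := card_switches_le (k := k) hy hx fun i hi => (hxy i hi).symm
    simp only [signedAltNum, altNum_eq_card_switches, hxy (k - 1) hj, abs_le]
    split_ifs <;> constructor <;> omega
  · have hx' := signedAltNum_mem_Icc_of_const fun i hi => hx i (by omega)
    have hy' := signedAltNum_mem_Icc_of_const fun i hi => hy i (by omega)
    rw [Set.mem_Icc] at hx' hy'
    rw [abs_le]
    constructor <;> omega

lemma abs_signedAltNum_sub_le_length (p : (hierGraph n k).Walk x y) :
    |signedAltNum x - signedAltNum y| ≤ p.length := by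
  induction p with
  | nil => simp
  | @cons u v w huv _ ih =>
    calc |signedAltNum u - signedAltNum w|
      _ ≤ |signedAltNum u - signedAltNum v| + |signedAltNum v - signedAltNum w| :=
        abs_sub_le _ _ _
      _ ≤ 1 + _ := by grw [abs_signedAltNum_sub_le_one huv, ih]
      _ = _ := by push_cast [SimpleGraph.Walk.length_cons]; ring

def flipPrefix (hn : ∀ i < k, 2 ≤ n i) (x : ∀ i : Fin k, Fin (n i)) (t : ℕ) :
    ∀ i : Fin k, Fin (n i) := fun i =>
  if i.val ≤ t then
    ⟨if zeroPattern x t then 1 else 0, by have := hn i i.isLt; split_ifs <;> omega⟩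
  else x i

section FlipPrefix

variable {hn : ∀ i < k, 2 ≤ n i} {t : ℕ}

lemma zeroPattern_flipPrefix (ht : t < k) (i : ℕ) :
    zeroPattern (flipPrefix hn x t) i ↔
      if i ≤ t then ¬zeroPattern x t else zeroPattern x i := by
  by_cases hik : i < k
  · by_cases hit : i ≤ t
    · simp only [zeroPattern, extVal_of_lt _ hik, flipPrefix, hit]
      split_ifs <;> simp_all
    · simp only [zeroPattern, extVal_of_lt _ hik, flipPrefix, hit]
      simp
  · rw [if_neg (by omega)]
    simp only [zeroPattern, extVal_of_le _ (not_lt.mp hik)]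

lemma adj_flipPrefix (ht : t < k) (hpre : ∀ i < t, zeroPattern x i ↔ zeroPattern x (i + 1)) :
    (hierGraph n k).Adj x (flipPrefix hn x t) := by
  have hx : ∀ i : Fin k, i.val ≤ t → ((x i).val = 0 ↔ zeroPattern x t) := fun i hi => by
    rw [← extVal_fin]
    exact iff_of_forall_lt_iff_succ hpre hi
  have hy : ∀ i : Fin k, i.val ≤ t → ((flipPrefix hn x t i).val = 0 ↔ ¬zeroPattern x t) :=
    fun i hi => by
      have := zeroPattern_flipPrefix (hn := hn) (x := x) ht i
      rwa [if_pos hi, zeroPattern, extVal_fin] at this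
  have hagree : ∀ i : Fin k, t < i.val → x i = flipPrefix hn x t i :=
    fun i hi => (if_neg (by omega)).symm
  refine ⟨fun hxy => ?_, Or.inr (Or.inl ⟨⟨t, ht⟩, ?_, hagree⟩)⟩
  · have := hy ⟨t, ht⟩ le_rfl
    rw [← hxy, hx ⟨t, ht⟩ le_rfl] at this
    exact iff_not_self this
  · by_cases h : zeroPattern x t
    · exact Or.inl ⟨fun i hi => (hx i hi).mpr h, fun i hi => (hy i hi).not.mpr (not_not.mpr h)⟩
    · exact Or.inr ⟨fun i hi => (hy i hi).mpr h, fun i hi => (hx i hi).not.mpr h⟩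

lemma altNum_flipPrefix (ht : t ∈ switches (zeroPattern x) k)
    (hpre : ∀ i < t, zeroPattern x i ↔ zeroPattern x (i + 1)) :
    altNum n k x = altNum n k (flipPrefix hn x t) + 1 := by
  have htk := (mem_switches.mp ht).1
  have hflip := zeroPattern_flipPrefix (hn := hn) (x := x) htk
  rw [altNum_eq_card_switches, altNum_eq_card_switches]
  refine card_switches_eq_succ hpre (fun i hi => ?_) (fun i hi => ?_) ht ?_
  · rw [hflip, hflip, if_pos hi.le, if_pos (Nat.succ_le_of_lt hi)]
  · rw [hflip, if_neg (by omega)]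
  · rw [mem_switches, hflip, hflip, if_pos le_rfl, if_neg (by omega)]
    have := (mem_switches.mp ht).2
    tauto

end FlipPrefix

lemma exists_walk_length_le_altNum (hn : ∀ i < k, 2 ≤ n i) {z : ∀ i : Fin k, Fin (n i)}
    (hz : ∀ j, zeroPattern z j) (x : ∀ i : Fin k, Fin (n i)) :
    ∃ p : (hierGraph n k).Walk x z, p.length ≤ altNum n k x := by
  generalize hm : altNum n k x = m
  induction m generalizing x with
  | zero =>
    rw [altNum_eq_card_switches, card_eq_zero] at hm
    obtain rfl := eq_of_switches_eq_empty hz hm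
    exact ⟨.nil, le_rfl⟩
  | succ m ih =>
    have hne : (switches (zeroPattern x) k).Nonempty := by
      rw [← card_pos, ← altNum_eq_card_switches, hm]
      omega
    obtain ⟨t, ht, hpre⟩ := exists_mem_switches_forall_lt hne
    rw [altNum_flipPrefix (hn := hn) ht hpre, Nat.add_right_cancel_iff] at hm
    obtain ⟨p, hp⟩ := ih (flipPrefix hn x t) hm
    exact ⟨.cons (adj_flipPrefix (mem_switches.mp ht).1 hpre) p, by simp; omega⟩

lemma altNum_add_altNum_eq_abs (h : ¬(zeroPattern x (k - 1) ↔ zeroPattern y (k - 1))) :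
    (altNum n k x + altNum n k y : ℤ) = |signedAltNum x - signedAltNum y| := by
  unfold signedAltNum
  split_ifs with hx hy hy
  · exact absurd (iff_of_true hx hy) h
  · rw [abs_of_nonpos (by omega)]
    ring
  · rw [abs_of_nonneg (by omega)]
    ring
  · exact absurd (iff_of_false hx hy) h

end HierGraph

/-- If `x_k ≠ y_k` and `x_k = 0` or `y_k = 0`, then `dist(x,y) = alt(x) + alt(y)`. -/
theorem stmt_5 (n : ℕ → ℕ) (k : ℕ) (hk : 2 ≤ k) (hn : ∀ i < k, 2 ≤ n i)
    (x y : ∀ i : Fin k, Fin (n i))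
    (hne : x ⟨k - 1, by omega⟩ ≠ y ⟨k - 1, by omega⟩)
    (h0 : (x ⟨k - 1, by omega⟩).val = 0 ∨ (y ⟨k - 1, by omega⟩).val = 0) :
    (hierGraph n k).dist x y = altNum n k x + altNum n k y := by
  set z : ∀ i : Fin k, Fin (n i) := fun i => ⟨0, by have := hn i i.isLt; omega⟩
  have hz : ∀ j, zeroPattern z j := fun j => by
    by_cases hj : j < k
    · exact extVal_of_lt z hj
    · exact zeroPattern_of_le z (by omega)
  obtain ⟨px, hpx⟩ := exists_walk_length_le_altNum hn hz x
  obtain ⟨py, hpy⟩ := exists_walk_length_le_altNum hn hz y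
  have hupper := SimpleGraph.dist_le (px.append py.reverse)
  rw [SimpleGraph.Walk.length_append, SimpleGraph.Walk.length_reverse] at hupper
  obtain ⟨p, hp⟩ := (px.append py.reverse).reachable.exists_walk_length_eq_dist
  have hlower := abs_signedAltNum_sub_le_length p
  have hlast : ¬(zeroPattern x (k - 1) ↔ zeroPattern y (k - 1)) := by
    rw [zeroPattern, zeroPattern, extVal_of_lt x (by omega), extVal_of_lt y (by omega)]
    exact fun h => hne (Fin.ext (by rcases h0 with h0 | h0 <;> simp_all))
  rw [← altNum_add_altNum_eq_abs hlast, hp] at hlower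
  omega
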